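/- Let ψ ∈ G_{n,r} be in semi-normal form with respect to X and also with respect to an expansion X′ of X. If a ψ-orbit O contains a pond with respect to X (i.e., O ∩ X⟨A⟩ is a disjoint union of a left semi-infinite and a right semi-infinite X-component, with the finitely many intermediate orbit elements outside X⟨A⟩), then O is also a pond orbit with respect to X′. -/

import Mathlib

/-- A Higman `Ω`-algebra in the variety `𝒱_n`: `n` descending (unary) operations
`α₁, …, α_n` and one `n`-ary contraction `λ`, satisfying the laws
`(wα₁, …, wα_n)λ = w` and `(w₁⋯w_nλ)α_i = w_i`. -/
class HigmanAlgebra (n : ℕ) (V : Type) where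
  desc : V → Fin n → V
  contr : (Fin n → V) → V
  contr_desc : ∀ w : V, contr (desc w) = w
  desc_contr : ∀ (f : Fin n → V) (i : Fin n), desc (contr f) i = f i

open HigmanAlgebra

/-- A homomorphism of Higman algebras: a map compatible with the descending
operations and the contraction. -/
def IsHom (n : ℕ) {V W : Type} [HigmanAlgebra n V] [HigmanAlgebra n W] (f : V → W) : Prop :=
  (∀ (v : V) (i : Fin n), f (desc v i) = desc (f v) i) ∧
  (∀ g : Fin n → V, f (contr g) = contr (f ∘ g))

/-- `X` is a basis (free generating set) of `V`: every map from `X` into a Higman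
algebra extends uniquely to a homomorphism. -/
def IsBasis (n : ℕ) {V : Type} [HigmanAlgebra n V] (X : Set V) : Prop :=
  ∀ (W : Type) [HigmanAlgebra n W], ∀ f : X → W,
    ∃! h : V → W, IsHom n h ∧ ∀ x : X, h x = f x

/-- The action of a word `Γ ∈ A*` in the descending operations: `v Γ`. -/
def applyWord {n : ℕ} {V : Type} [HigmanAlgebra n V] (v : V) (Γ : List (Fin n)) : V :=
  Γ.foldl (fun u i => desc u i) v

/-- A simple expansion of `Y` replaces some `y ∈ Y` by `yα₁, …, yα_n`. -/
def SimpleExpansion (n : ℕ) {V : Type} [HigmanAlgebra n V] (Y Z : Set V) : Prop :=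
  ∃ y ∈ Y, Z = (Y \ {y}) ∪ Set.range (fun i : Fin n => desc y i)

/-- An expansion of `Y`: the result of finitely many simple expansions. -/
def Expansion (n : ℕ) {V : Type} [HigmanAlgebra n V] : Set V → Set V → Prop :=
  Relation.ReflTransGen (SimpleExpansion n)

/-- `X⟨A⟩ = { xΓ : x ∈ X, Γ ∈ A* }`. -/
def wordClosure (n : ℕ) {V : Type} [HigmanAlgebra n V] (X : Set V) : Set V :=
  {v | ∃ x ∈ X, ∃ Γ : List (Fin n), v = applyWord x Γ}

/-- `ψ` is in semi-normal form with respect to `X`: no element of `X⟨A⟩` lies in an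
incomplete finite `X`-component of a `ψ`-orbit, i.e. there is no `y ∈ X⟨A⟩` whose
`X`-component is bounded in both directions. -/
def SemiNormal (n : ℕ) {V : Type} [HigmanAlgebra n V] (ψ : Equiv.Perm V) (X : Set V) : Prop :=
  ∀ y ∈ wordClosure n X, ¬ ∃ a b : ℤ, a ≤ 0 ∧ 0 ≤ b ∧
      (∀ i : ℤ, a ≤ i → i ≤ b → (ψ ^ i) y ∈ wordClosure n X) ∧
      (ψ ^ (a - 1)) y ∉ wordClosure n X ∧ (ψ ^ (b + 1)) y ∉ wordClosure n X

/-- `(m, Γ)` is the characteristic of `u` with respect to `ψ`: `u ψ^m = u Γ` with `Γ`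
nonempty, and `u ψ^i ∉ u⟨A⟩` for all `i` with `0 < |i| < |m|`. -/
def IsCharacteristic (n : ℕ) {V : Type} [HigmanAlgebra n V] (ψ : Equiv.Perm V)
    (u : V) (m : ℤ) (Γ : List (Fin n)) : Prop :=
  m ≠ 0 ∧ Γ ≠ [] ∧ (ψ ^ m) u = applyWord u Γ ∧
    ∀ i : ℤ, i ≠ 0 → |i| < |m| → ∀ Δ : List (Fin n), (ψ ^ i) u ≠ applyWord u Δ

/-- The `ψ`-orbit of `y` is a pond orbit with respect to `X`: its intersection with
`X⟨A⟩` consists of exactly one left semi-infinite and one right semi-infinite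
`X`-component, with the (finitely many, at least one) intermediate orbit elements
lying outside `X⟨A⟩`. -/
def IsPondOrbit (n : ℕ) {V : Type} [HigmanAlgebra n V]
    (ψ : Equiv.Perm V) (X : Set V) (y : V) : Prop :=
  ∃ a b : ℤ, a + 1 < b ∧
    ∀ i : ℤ, ((ψ ^ i) y ∈ wordClosure n X ↔ (i ≤ a ∨ b ≤ i))


section Aux

variable {n : ℕ} {V : Type} [HigmanAlgebra n V]

lemma applyWord_append (v : V) (Γ₁ Γ₂ : List (Fin n)) :
    applyWord v (Γ₁ ++ Γ₂) = applyWord (applyWord v Γ₁) Γ₂ :=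
  List.foldl_append

lemma simpleExpansion_closure_subset {X X' : Set V}
    (h : SimpleExpansion n X X') : wordClosure n X' ⊆ wordClosure n X := by
  obtain ⟨y, hy, rfl⟩ := h
  rintro v ⟨x, hx, Γ, rfl⟩
  rcases hx with ⟨hx, -⟩ | ⟨i, rfl⟩
  · exact ⟨x, hx, Γ, rfl⟩
  · exact ⟨y, hy, i :: Γ, rfl⟩

lemma simpleExpansion_diff_finite {X X' : Set V}
    (h : SimpleExpansion n X X') : (wordClosure n X \ wordClosure n X').Finite := by
  obtain ⟨y, hy, rfl⟩ := h
  apply Set.Finite.subset (Set.finite_singleton y)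
  rintro v ⟨⟨x, hx, Γ, rfl⟩, hv'⟩
  by_cases hxy : x = y
  · subst hxy
    cases Γ with
    | nil => rfl
    | cons i Γ' => exact absurd ⟨desc x i, Or.inr ⟨i, rfl⟩, Γ', rfl⟩ hv'
  · exact absurd ⟨x, Or.inl ⟨hx, hxy⟩, Γ, rfl⟩ hv'

lemma expansion_closure_subset {X X' : Set V}
    (h : Expansion n X X') : wordClosure n X' ⊆ wordClosure n X := by
  induction h with
  | refl => exact subset_rfl
  | tail _ h ih => exact (simpleExpansion_closure_subset h).trans ih

lemma expansion_diff_finite {X X' : Set V}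
    (h : Expansion n X X') : (wordClosure n X \ wordClosure n X').Finite := by
  induction h with
  | refl => simp
  | @tail Y Z hXY hYZ ih =>
    apply Set.Finite.subset (ih.union (simpleExpansion_diff_finite hYZ))
    rintro v ⟨hv, hv'⟩
    by_cases hY : v ∈ wordClosure n Y
    · exact Or.inr ⟨hY, hv'⟩
    · exact Or.inl ⟨hv, hY⟩

end Aux


/-- Let `ψ ∈ G_{n,r}` be in semi-normal form with respect to `X` and also with respect
to an expansion `X′` of `X`.  If a `ψ`-orbit is a pond orbit with respect to `X`, then
it is also a pond orbit with respect to `X′`. -/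

theorem stmt19 (n r : ℕ) (hn : 2 ≤ n) {V : Type} [HigmanAlgebra n V]
    (X₀ : Set V) (hX₀ : IsBasis n X₀) (hX₀fin : X₀.Finite) (hX₀card : X₀.ncard = r)
    (hr : 1 ≤ r)
    (ψ : Equiv.Perm V) (hψ : IsHom n ⇑ψ)
    (X : Set V) (hX : Expansion n X₀ X) (hsnfX : SemiNormal n ψ X)
    (X' : Set V) (hX' : Expansion n X X') (hsnfX' : SemiNormal n ψ X')
    (y : V) (hpond : IsPondOrbit n ψ X y) :
    IsPondOrbit n ψ X' y := by
  obtain ⟨a, b, hab, hmem⟩ := hpond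
  -- the orbit points are pairwise distinct
  have hinj : ∀ p q : ℤ, (ψ ^ p) y = (ψ ^ q) y → p = q := by
    intro p q hpq
    by_contra hne
    have hd : (ψ ^ (q - p)) y = y := by
      have h1 := congrArg (⇑(ψ ^ (-p))) hpq
      rw [← Equiv.Perm.mul_apply, ← Equiv.Perm.mul_apply, ← zpow_add, ← zpow_add] at h1
      rw [show -p + p = 0 by ring, show -p + q = q - p by ring] at h1
      simpa using h1.symm
    set d := q - p with hdef
    have hd0 : d ≠ 0 := sub_ne_zero_of_ne fun h => hne h.symm
    have hdd : (ψ ^ (d * d)) y = y := by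
      rw [zpow_mul]
      exact Function.IsFixedPt.perm_zpow hd d
    have h1 : (ψ ^ (a + 1)) y = (ψ ^ (a + 1 - d * d)) y := by
      conv_lhs => rw [show a + 1 = (a + 1 - d * d) + d * d by ring]
      rw [zpow_add, Equiv.Perm.mul_apply, hdd]
    have hdd1 : 0 < d * d := mul_self_pos.mpr hd0
    have hmem1 : (ψ ^ (a + 1)) y ∈ wordClosure n X := by
      rw [h1]; exact (hmem _).mpr (Or.inl (by omega))
    rcases (hmem _).mp hmem1 with h | h <;> omega
  have hsubX : wordClosure n X' ⊆ wordClosure n X := expansion_closure_subset hX'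
  have hfin : (wordClosure n X \ wordClosure n X').Finite := expansion_diff_finite hX'
  -- membership in X'⟨A⟩ implies membership in the pond shores
  have hsub : ∀ i : ℤ, (ψ ^ i) y ∈ wordClosure n X' → i ≤ a ∨ b ≤ i :=
    fun i h => (hmem i).mp (hsubX h)
  -- points strictly inside the pond are outside X'⟨A⟩
  have hgap : ∀ i : ℤ, a < i → i < b → (ψ ^ i) y ∉ wordClosure n X' := by
    intro i h1 h2 h
    rcases hsub i h with h' | h' <;> omega
  -- a semi-infinite family of shore points cannot all miss X'⟨A⟩
  have hne : ∀ (s : Set ℤ), s.Infinite → (∀ i ∈ s, (ψ ^ i) y ∈ wordClosure n X) →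
      ∃ i ∈ s, (ψ ^ i) y ∈ wordClosure n X' := by
    intro s hs hsX
    by_contra hcon
    push_neg at hcon
    have hinj' : Set.InjOn (fun i : ℤ => (ψ ^ i) y) s := fun p _ q _ h => hinj p q h
    have himg : (fun i : ℤ => (ψ ^ i) y) '' s ⊆ wordClosure n X \ wordClosure n X' := by
      rintro v ⟨i, hi, rfl⟩
      exact ⟨hsX i hi, hcon i hi⟩
    exact ((hs.image hinj').mono himg) hfin
  -- key: an X'-point of the orbit cannot have missing points on both sides
  have key : ∀ j : ℤ, (ψ ^ j) y ∈ wordClosure n X' →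
      (∃ i < j, (ψ ^ i) y ∉ wordClosure n X') →
      (∃ k > j, (ψ ^ k) y ∉ wordClosure n X') → False := by
    intro j hj ⟨i, hij, hi⟩ ⟨k, hjk, hk⟩
    obtain ⟨m, ⟨hmj, hmS⟩, hmax⟩ :=
      Int.exists_greatest_of_bdd (P := fun t => t < j ∧ (ψ ^ t) y ∉ wordClosure n X')
        ⟨j, fun z hz => le_of_lt hz.1⟩ ⟨i, hij, hi⟩
    obtain ⟨M, ⟨hjM, hMS⟩, hmin⟩ :=
      Int.exists_least_of_bdd (P := fun t => j < t ∧ (ψ ^ t) y ∉ wordClosure n X')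
        ⟨j, fun z hz => le_of_lt hz.1⟩ ⟨k, hjk, hk⟩
    have hbetween : ∀ t : ℤ, m < t → t < M → (ψ ^ t) y ∈ wordClosure n X' := by
      intro t h1 h2
      by_contra ht
      rcases lt_or_ge t j with h | h
      · exact absurd (hmax t ⟨h, ht⟩) (by omega)
      · rcases eq_or_lt_of_le h with rfl | h
        · exact ht hj
        · exact absurd (hmin t ⟨h, ht⟩) (by omega)
    refine hsnfX' ((ψ ^ j) y) hj ⟨m + 1 - j, M - 1 - j, by omega, by omega, ?_, ?_, ?_⟩
    · intro t h1 h2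
      rw [← Equiv.Perm.mul_apply, ← zpow_add]
      exact hbetween (t + j) (by omega) (by omega)
    · rw [← Equiv.Perm.mul_apply, ← zpow_add, show m + 1 - j - 1 + j = m by ring]
      exact hmS
    · rw [← Equiv.Perm.mul_apply, ← zpow_add, show M - 1 - j + 1 + j = M by ring]
      exact hMS
  -- the left shore intersected with X'⟨A⟩ is nonempty and bounded above
  obtain ⟨i₀, hi₀a, hi₀⟩ : ∃ i ≤ a, (ψ ^ i) y ∈ wordClosure n X' := by
    obtain ⟨i, hi, h⟩ := hne (Set.Iic a) (Set.Iic_infinite a)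
      (fun i hi => (hmem i).mpr (Or.inl hi))
    exact ⟨i, hi, h⟩
  obtain ⟨j₀, hj₀b, hj₀⟩ : ∃ j, b ≤ j ∧ (ψ ^ j) y ∈ wordClosure n X' := by
    obtain ⟨i, hi, h⟩ := hne (Set.Ici b) (Set.Ici_infinite b)
      (fun i hi => (hmem i).mpr (Or.inr hi))
    exact ⟨i, hi, h⟩
  obtain ⟨a', ⟨ha'a, ha'⟩, ha'max⟩ :=
    Int.exists_greatest_of_bdd (P := fun t => t ≤ a ∧ (ψ ^ t) y ∈ wordClosure n X')
      ⟨a, fun z hz => hz.1⟩ ⟨i₀, hi₀a, hi₀⟩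
  obtain ⟨b', ⟨hb'b, hb'⟩, hb'min⟩ :=
    Int.exists_least_of_bdd (P := fun t => b ≤ t ∧ (ψ ^ t) y ∈ wordClosure n X')
      ⟨b, fun z hz => hz.1⟩ ⟨j₀, hj₀b, hj₀⟩
  refine ⟨a', b', by omega, fun i => ⟨?_, ?_⟩⟩
  · intro hi
    rcases hsub i hi with h | h
    · exact Or.inl (ha'max i ⟨h, hi⟩)
    · exact Or.inr (hb'min i ⟨h, hi⟩)
  · rintro (hi | hi)
    · -- downward closed on the left shore
      by_contra hiS
      exact key a' ha'
        ⟨i, by rcases lt_or_eq_of_le hi with h | rfl; exacts [h, absurd ha' hiS], hiS⟩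
        ⟨a + 1, by omega, hgap (a + 1) (by omega) (by omega)⟩
    · by_contra hiS
      exact key b' hb'
        ⟨b - 1, by omega, hgap (b - 1) (by omega) (by omega)⟩
        ⟨i, by rcases lt_or_eq_of_le hi with h | rfl; exacts [h, absurd hb' hiS], hiS⟩
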